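/- The equation AΣA = Σ' for A ∈ S⁺ⁿ, with Σ, Σ' ∈ S⁺ⁿ given, has the unique symmetric positive definite solution A = Σ^{-1/2}(Σ^{1/2}Σ'Σ^{1/2})^{1/2}Σ^{-1/2}. -/

import Mathlib

open Matrix

section

open scoped ComplexOrder

/-- The positive semidefinite square root, as defined in Mathlib of December 2024
(`Matrix.PosSemidef.sqrt`, since removed from Mathlib). -/
noncomputable def Matrix.PosSemidef.sqrt {n : Type*} [Fintype n] [DecidableEq n]
    {𝕜 : Type*} [RCLike 𝕜] {A : Matrix n n 𝕜} (hA : A.PosSemidef) : Matrix n n 𝕜 :=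
  hA.1.eigenvectorUnitary.1 * diagonal ((↑) ∘ (√·) ∘ hA.1.eigenvalues) *
  (star hA.1.eigenvectorUnitary : Matrix n n 𝕜)

end

/-!
Write `R = Σ^{1/2}`. Since `(R A R)² = R (A Σ A) R`, the equation `A Σ A = Σ'` says exactly that
`R A R` is a positive square root of `R Σ' R`; as `A ↦ R A R` is a bijection of the positive cone,
uniqueness of positive square roots gives the unique solution `R⁻¹ (R Σ' R)^{1/2} R⁻¹`, the
geometric mean `Σ⁻¹ # Σ'`. Only the continuous functional calculus is involved, and positive
definite matrices are exactly the strictly positive elements of the matrix algebra.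
-/

namespace CFC

open Ring

variable {A : Type*} [PartialOrder A] [Ring A] [StarRing A] [TopologicalSpace A]
  [StarOrderedRing A] [Algebra ℝ A] [ContinuousFunctionalCalculus ℝ A IsSelfAdjoint]
  [NonnegSpectrumClass ℝ A] [IsSemitopologicalRing A]

lemma conjSqrt_nonneg (c : A) {a : A} (ha : 0 ≤ a) : 0 ≤ conjSqrt c a :=
  conjugate_nonneg_of_nonneg ha (sqrt_nonneg c)

variable [T2Space A]

lemma mul_mul_eq_iff_conjSqrt_mul_self_eq {c x a : A} (hc : IsStrictlyPositive c) :
    x * c * x = a ↔ conjSqrt c x * conjSqrt c x = conjSqrt c a := by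
  have hr : IsUnit (sqrt c) := hc.isUnit_cfcSqrt
  have hrr : sqrt c * sqrt c = c := sqrt_mul_sqrt_self c hc.nonneg
  have : conjSqrt c x * conjSqrt c x = sqrt c * (x * c * x) * sqrt c := calc
    _ = sqrt c * (x * (sqrt c * sqrt c) * x) * sqrt c := by simp only [conjSqrt_apply, mul_assoc]
    _ = _ := by rw [hrr]
  rw [this, conjSqrt_apply, hr.mul_left_inj, hr.mul_right_inj]

lemma mul_mul_eq_iff_eq_conjSqrt_ringInverse_sqrt_conjSqrt {c a x : A}
    (hc : IsStrictlyPositive c) (ha : 0 ≤ a) (hx : 0 ≤ x) :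
    x * c * x = a ↔ x = conjSqrt c⁻¹ʳ (sqrt (conjSqrt c a)) := by
  rw [mul_mul_eq_iff_conjSqrt_mul_self_eq hc]
  constructor
  · intro h
    rw [sqrt_unique h (conjSqrt_nonneg c hx), conjSqrt_ringInverse_conjSqrt _ _ hc]
  · rintro rfl
    rw [conjSqrt_conjSqrt_ringInverse _ _ hc]
    exact sqrt_mul_sqrt_self _ (conjSqrt_nonneg c ha)

lemma isStrictlyPositive_conjSqrt_ringInverse_sqrt_conjSqrt {c a : A}
    (hc : IsStrictlyPositive c) (ha : IsStrictlyPositive a) :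
    IsStrictlyPositive (conjSqrt c⁻¹ʳ (sqrt (conjSqrt c a))) := by
  rw [isStrictlyPositive_conjSqrt_iff _ _ hc.ringInverse]
  exact IsStrictlyPositive.sqrt _ ((isStrictlyPositive_conjSqrt_iff _ _ hc).2 ha)

end CFC

namespace Matrix

open scoped MatrixOrder ComplexOrder
open CFC Ring

variable {n 𝕜 : Type*} [Fintype n] [DecidableEq n] [RCLike 𝕜]

lemma PosSemidef.sqrt_eq_cfcSqrt {M : Matrix n n 𝕜} (hM : M.PosSemidef) :
    hM.sqrt = CFC.sqrt M := by
  rw [CFC.sqrt_eq_real_sqrt M hM.nonneg, cfcₙ_eq_cfc (hf := Real.continuous_sqrt.continuousOn)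
    (hf0 := Real.sqrt_zero), hM.1.cfc_eq, IsHermitian.cfc, Unitary.conjStarAlgAut_apply]
  rfl

lemma PosDef.sqrt_inv_mul_sqrt_mul_sqrt_inv_eq_conjSqrt {S S' : Matrix n n 𝕜} (hS : S.PosDef)
    (hmid : (hS.posSemidef.sqrt * S' * hS.posSemidef.sqrt).PosSemidef) :
    hS.posSemidef.sqrt⁻¹ * hmid.sqrt * hS.posSemidef.sqrt⁻¹ =
      conjSqrt S⁻¹ʳ (CFC.sqrt (conjSqrt S S')) := by
  simp only [PosSemidef.sqrt_eq_cfcSqrt, conjSqrt_apply, sqrt_ringInverse,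
    nonsing_inv_eq_ringInverse]

end Matrix

theorem stmt14 {n : ℕ}
    (S S' : Matrix (Fin n) (Fin n) ℝ) (hS : S.PosDef) (hS' : S'.PosDef)
    (hmid : (hS.posSemidef.sqrt * S' * hS.posSemidef.sqrt).PosSemidef)
    (A0 : Matrix (Fin n) (Fin n) ℝ)
    (hA0 : A0 = hS.posSemidef.sqrt⁻¹ * hmid.sqrt * hS.posSemidef.sqrt⁻¹) :
    A0.PosDef ∧ A0 * S * A0 = S' ∧
    (∀ A : Matrix (Fin n) (Fin n) ℝ, A.PosDef → A * S * A = S' → A = A0) := by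
  open scoped MatrixOrder in
  rw [hA0, hS.sqrt_inv_mul_sqrt_mul_sqrt_inv_eq_conjSqrt hmid]
  have hpos := CFC.isStrictlyPositive_conjSqrt_ringInverse_sqrt_conjSqrt
    hS.isStrictlyPositive hS'.isStrictlyPositive
  have hsolve {X : Matrix (Fin n) (Fin n) ℝ} (hX : 0 ≤ X) :=
    CFC.mul_mul_eq_iff_eq_conjSqrt_ringInverse_sqrt_conjSqrt hS.isStrictlyPositive
      hS'.posSemidef.nonneg hX
  exact ⟨hpos.posDef, (hsolve hpos.nonneg).2 rfl,
    fun A hA hASA => (hsolve hA.posSemidef.nonneg).1 hASA⟩
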